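/- Suppose that for some i ∈ I the adjoint L_i* : G_i → H is surjective and F_i is surjective. Then the relaxed problem has a solution: there exists x ∈ C such that Σ_{j∈I} ω_j ⟪L_j(y − x), F_j(L_j x) − p_j⟫ ≥ 0 for every y ∈ C. -/

import Mathlib

/-!
With `T x = ∑ j, ω j • (L j)† (F j (L j x) - p j)`, which is monotone and Lipschitz, the claim is
the variational inequality `0 ≤ ⟪y - x, T x⟫` for `y ∈ C`. For `t > 0` and a fixed `z₀ ∈ C` the
regularized operator `T + t • (· - z₀)` is strongly monotone, so its inequality is solved by a
fixed point of the contraction `x ↦ P_C (x - γ • (T x + t • (x - z₀)))`. The solutions `x_t`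
satisfy `⟪x_t - z₀, T x_t⟫ ≤ 0`, `‖x_t - z₀‖` increases as `t ↓ 0` and
`‖x_s - x_t‖² ≤ ‖x_s - z₀‖² - ‖x_t - z₀‖²` for `s ≤ t`, so they converge to a solution as soon as
they stay bounded.

Boundedness is where the surjectivity hypotheses enter. If `⟪x - z₀, T x⟫ ≤ 0`, then
`⟪L i (x - z₀), F i (L i x) - a⟫ ≤ 0` for a suitable `a`. Testing the monotonicity of `F i`
against a preimage of `g + a` bounds `⟪L i x, g⟫` by `c_g * (1 + ‖F i (L i x) - a‖)` for every
`g`; since `(L i)†` is onto, Banach–Steinhaus turns these weak bounds into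
`‖x‖ ≤ c * (1 + ‖F i (L i x) - a‖)`, while firm nonexpansiveness makes the right-hand side grow
only like `√‖x‖`.
-/

open RealInnerProductSpace Bornology Filter Topology

section FirmlyNonexpansive

variable {G : Type*} [NormedAddCommGroup G] [InnerProductSpace ℝ G]

def FirmlyNonexpansive (F : G → G) : Prop :=
  ∀ u v, ⟪u - v, F u - F v⟫ ≥ ‖F u - F v‖ ^ 2

namespace FirmlyNonexpansive

variable {F : G → G}

theorem inner_sub_nonneg (hF : FirmlyNonexpansive F) (u v : G) : 0 ≤ ⟪u - v, F u - F v⟫ :=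
  (sq_nonneg _).trans (hF u v)

theorem lipschitzWith_one (hF : FirmlyNonexpansive F) : LipschitzWith 1 F := by
  refine LipschitzWith.of_dist_le_mul fun u v => ?_
  rw [NNReal.coe_one, one_mul, dist_eq_norm, dist_eq_norm]
  have h := (hF u v).trans (real_inner_le_norm _ _)
  nlinarith [norm_nonneg (F u - F v), norm_nonneg (u - v)]

theorem norm_sub_sq_le_of_inner_sub_nonpos (hF : FirmlyNonexpansive F) {u u₀ a : G}
    (h : ⟪u - u₀, F u - a⟫ ≤ 0) :
    ‖F u - a‖ ^ 2 ≤ 2 * ‖F u₀ - a‖ * (‖u - u₀‖ + ‖F u₀ - a‖) := by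
  have hsplit : F u - a = (F u - F u₀) + (F u₀ - a) := by abel
  have hfirm : ‖F u - F u₀‖ ^ 2 ≤ ‖u - u₀‖ * ‖F u₀ - a‖ := by
    have h₁ : ⟪u - u₀, F u - F u₀⟫ = ⟪u - u₀, F u - a⟫ - ⟪u - u₀, F u₀ - a⟫ := by
      rw [← inner_sub_right, sub_sub_sub_cancel_right]
    have h₂ := neg_le_of_abs_le (abs_real_inner_le_norm (u - u₀) (F u₀ - a))
    linarith [hF u u₀]
  calc ‖F u - a‖ ^ 2 ≤ (‖F u - F u₀‖ + ‖F u₀ - a‖) ^ 2 := by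
        rw [hsplit]; gcongr; exact norm_add_le _ _
    _ ≤ 2 * ‖F u - F u₀‖ ^ 2 + 2 * ‖F u₀ - a‖ ^ 2 := by
        nlinarith [sq_nonneg (‖F u - F u₀‖ - ‖F u₀ - a‖)]
    _ ≤ 2 * ‖F u₀ - a‖ * (‖u - u₀‖ + ‖F u₀ - a‖) := by nlinarith

end FirmlyNonexpansive

end FirmlyNonexpansive

theorem exists_inner_le_of_inner_sub_nonpos {G : Type*} [NormedAddCommGroup G]
    [InnerProductSpace ℝ G] {F : G → G} (hF : ∀ u v, 0 ≤ ⟪u - v, F u - F v⟫)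
    (hFs : Function.Surjective F) (u₀ a g : G) :
    ∃ c, ∀ u, ⟪u - u₀, F u - a⟫ ≤ 0 → ⟪u, g⟫ ≤ c * (1 + ‖F u - a‖) := by
  obtain ⟨v, hv⟩ := hFs (g + a)
  refine ⟨‖u₀ - v‖ + |⟪v, g⟫|, fun u hu => ?_⟩
  have key : ⟪u, g⟫ ≤ ⟪u₀ - v, F u - a⟫ + ⟪v, g⟫ := by
    have hmono := hF u v
    rw [show F u - F v = (F u - a) - g by rw [hv]; abel] at hmono
    simp only [inner_sub_left, inner_sub_right] at hu hmono ⊢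
    linarith
  have h₁ := real_inner_le_norm (u₀ - v) (F u - a)
  have h₂ := le_abs_self ⟪v, g⟫
  nlinarith [norm_nonneg (u₀ - v), abs_nonneg ⟪v, g⟫, norm_nonneg (F u - a)]

theorem exists_norm_le_mul_of_forall_inner_le {E : Type*} [NormedAddCommGroup E]
    [InnerProductSpace ℝ E] [CompleteSpace E] {S : Set E} {ρ : E → ℝ} (hρ : ∀ x ∈ S, 0 < ρ x)
    (h : ∀ w, ∃ c, ∀ x ∈ S, ⟪x, w⟫ ≤ c * ρ x) : ∃ c, ∀ x ∈ S, ‖x‖ ≤ c * ρ x := by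
  have hpointwise : ∀ w, ∃ C, ∀ x : S, ‖innerSL ℝ ((ρ x)⁻¹ • (x : E)) w‖ ≤ C := by
    intro w
    obtain ⟨c₁, hc₁⟩ := h w
    obtain ⟨c₂, hc₂⟩ := h (-w)
    refine ⟨max c₁ c₂, fun ⟨x, hx⟩ => ?_⟩
    have h₁ := hc₁ x hx
    have h₂ := hc₂ x hx
    rw [inner_neg_right] at h₂
    have hρx := hρ x hx
    rw [innerSL_apply_apply, real_inner_smul_left, Real.norm_eq_abs, abs_mul,
      abs_of_pos (inv_pos.2 hρx), inv_mul_le_iff₀ hρx, abs_le]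
    constructor <;> nlinarith [le_max_left c₁ c₂, le_max_right c₁ c₂]
  obtain ⟨c, hc⟩ := banach_steinhaus hpointwise
  refine ⟨c, fun x hx => ?_⟩
  have := hc ⟨x, hx⟩
  rw [innerSL_apply_norm, norm_smul, Real.norm_of_nonneg (inv_nonneg.2 (hρ x hx).le),
    inv_mul_le_iff₀ (hρ x hx)] at this
  linarith [mul_comm (ρ x) c]

theorem isBounded_setOf_inner_map_sub_nonpos {H G : Type*} [NormedAddCommGroup H]
    [InnerProductSpace ℝ H] [CompleteSpace H] [NormedAddCommGroup G] [InnerProductSpace ℝ G]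
    [CompleteSpace G] {M : H →L[ℝ] G} (hM : Function.Surjective (ContinuousLinearMap.adjoint M))
    {F : G → G} (hF : FirmlyNonexpansive F) (hFs : Function.Surjective F) (z₀ : H) (a : G) :
    IsBounded {x | ⟪M (x - z₀), F (M x) - a⟫ ≤ 0} := by
  have hweak : ∀ h : H, ∃ c, ∀ x ∈ {x | ⟪M (x - z₀), F (M x) - a⟫ ≤ 0},
      ⟪x, h⟫ ≤ c * (1 + ‖F (M x) - a‖) := by
    intro h
    obtain ⟨g, rfl⟩ := hM h
    obtain ⟨c, hc⟩ := exists_inner_le_of_inner_sub_nonpos hF.inner_sub_nonneg hFs (M z₀) a g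
    refine ⟨c, fun x hx => ?_⟩
    rw [ContinuousLinearMap.adjoint_inner_right]
    exact hc _ (by rw [← map_sub]; exact hx)
  obtain ⟨c, hc⟩ := exists_norm_le_mul_of_forall_inner_le (fun x _ => by positivity) hweak
  set e := ‖F (M z₀) - a‖
  set β := 2 * e * ‖M‖ * |c|
  set α := 2 * e * (‖M‖ * |c| + ‖M‖ * ‖z₀‖ + e)
  refine isBounded_iff_forall_norm_le.2 ⟨|c| * (2 + α + β), fun x hx => ?_⟩
  set s := ‖F (M x) - a‖
  have hxs : ‖x‖ ≤ |c| * (1 + s) := (hc x hx).trans (by gcongr; exact le_abs_self c)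
  have hMx : ‖M x - M z₀‖ ≤ ‖M‖ * (‖x‖ + ‖z₀‖) := by
    rw [← map_sub]; exact ((M.le_opNorm _).trans (by gcongr; exact norm_sub_le _ _))
  have hsq : s ^ 2 ≤ α + β * s :=
    calc s ^ 2 ≤ 2 * e * (‖M x - M z₀‖ + e) :=
          hF.norm_sub_sq_le_of_inner_sub_nonpos (by rw [← map_sub]; exact hx)
      _ ≤ 2 * e * (‖M‖ * (|c| * (1 + s) + ‖z₀‖) + e) := by gcongr; exact hMx.trans (by gcongr)
      _ = α + β * s := by ring
  have hα : 0 ≤ α := by positivity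
  have hβ : 0 ≤ β := by positivity
  have hs : s ≤ 1 + α + β := by nlinarith [norm_nonneg (F (M x) - a)]
  calc ‖x‖ ≤ |c| * (1 + s) := hxs
    _ ≤ |c| * (2 + α + β) := mul_le_mul_of_nonneg_left (by linarith) (abs_nonneg c)

theorem cauchySeq_of_norm_sub_sq_le {E : Type*} [SeminormedAddCommGroup E] {x : ℕ → E}
    {r : ℕ → ℝ} (hr : BddAbove (Set.range r)) (h : ∀ n m, n ≤ m → ‖x m - x n‖ ^ 2 ≤ r m - r n) :
    CauchySeq x := by
  refine Metric.cauchySeq_iff'.2 fun ε hε => ?_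
  obtain ⟨N, hN⟩ := exists_lt_of_lt_ciSup (f := r) (b := (⨆ n, r n) - ε ^ 2) (by
    have := pow_pos hε 2; linarith)
  refine ⟨N, fun n hn => ?_⟩
  rw [dist_eq_norm]
  refine lt_of_pow_lt_pow_left₀ 2 hε.le ((h N n hn).trans_lt ?_)
  linarith [le_ciSup hr n]

section VariationalInequality

variable {E : Type*} [NormedAddCommGroup E] [InnerProductSpace ℝ E] {C : Set E}

theorem norm_sub_le_of_forall_inner_sub_nonpos {u u' v v' : E} (hv : v ∈ C) (hv' : v' ∈ C)
    (h : ∀ w ∈ C, ⟪u - v, w - v⟫ ≤ 0) (h' : ∀ w ∈ C, ⟪u' - v', w - v'⟫ ≤ 0) :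
    ‖v - v'‖ ≤ ‖u - u'‖ := by
  have key : ‖v - v'‖ ^ 2 ≤ ⟪u - u', v - v'⟫ := by
    have h₁ := h v' hv'
    have h₂ := h' v hv
    rw [← neg_sub v v', inner_neg_right] at h₁
    rw [show u - u' = (u - v) - (u' - v') + (v - v') by abel, inner_add_left, inner_sub_left,
      real_inner_self_eq_norm_sq]
    linarith
  have := key.trans (real_inner_le_norm _ _)
  nlinarith [norm_nonneg (v - v'), norm_nonneg (u - u')]

theorem norm_sub_smul_le_of_le_inner {d e : E} {μ Λ : ℝ} (hμ : 0 < μ) (hμΛ : μ ≤ Λ)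
    (hde : μ * ‖d‖ ^ 2 ≤ ⟪d, e⟫) (he : ‖e‖ ≤ Λ * ‖d‖) :
    ‖d - (μ / Λ ^ 2) • e‖ ≤ (1 - μ ^ 2 / (2 * Λ ^ 2)) * ‖d‖ := by
  have hΛ : 0 < Λ := hμ.trans_le hμΛ
  set q := μ / Λ with hq
  have hq0 : 0 < q := div_pos hμ hΛ
  have hq1 : q ≤ 1 := (div_le_one hΛ).2 hμΛ
  have hγ : μ / Λ ^ 2 = q / Λ := by rw [hq]; field_simp
  have hκ : 1 - μ ^ 2 / (2 * Λ ^ 2) = 1 - q ^ 2 / 2 := by rw [hq]; field_simp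
  rw [hγ, hκ]
  have hinner : q ^ 2 * ‖d‖ ^ 2 ≤ q / Λ * ⟪d, e⟫ := by
    calc q ^ 2 * ‖d‖ ^ 2 = q / Λ * (μ * ‖d‖ ^ 2) := by rw [hq]; field_simp
      _ ≤ q / Λ * ⟪d, e⟫ := by gcongr
  have hnorm : (q / Λ) ^ 2 * ‖e‖ ^ 2 ≤ q ^ 2 * ‖d‖ ^ 2 := by
    calc (q / Λ) ^ 2 * ‖e‖ ^ 2 ≤ (q / Λ) ^ 2 * (Λ * ‖d‖) ^ 2 := by gcongr
      _ = q ^ 2 * ‖d‖ ^ 2 := by field_simp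
  have hsq : ‖d - (q / Λ) • e‖ ^ 2 ≤ ((1 - q ^ 2 / 2) * ‖d‖) ^ 2 := by
    rw [norm_sub_sq_real, real_inner_smul_right, norm_smul, Real.norm_of_nonneg (by positivity),
      mul_pow]
    nlinarith [sq_nonneg (q ^ 2 * ‖d‖), sq_nonneg ‖d‖]
  have hκ0 : 0 ≤ 1 - q ^ 2 / 2 := by nlinarith
  exact (pow_le_pow_iff_left₀ (norm_nonneg _) (by positivity) two_ne_zero).1 hsq

theorem norm_sub_sq_le_of_regularized {T : E → E} (hT : ∀ x y, 0 ≤ ⟪x - y, T x - T y⟫)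
    {z₀ xs xt : E} {s t : ℝ} (hs : 0 < s) (hst : s ≤ t) (hxs : xs ∈ C) (hxt : xt ∈ C)
    (hs' : ∀ y ∈ C, 0 ≤ ⟪y - xs, T xs + s • (xs - z₀)⟫)
    (ht' : ∀ y ∈ C, 0 ≤ ⟪y - xt, T xt + t • (xt - z₀)⟫) :
    ‖xs - xt‖ ^ 2 ≤ ‖xs - z₀‖ ^ 2 - ‖xt - z₀‖ ^ 2 := by
  set a := xs - z₀
  set b := xt - z₀
  have hab : xs - xt = a - b := by simp only [a, b]; abel
  -- adding the two inequalities, the monotone part drops out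
  have key : s * ‖a‖ ^ 2 + t * ‖b‖ ^ 2 ≤ (s + t) * ⟪a, b⟫ := by
    have h₁ := hs' xt hxt
    have h₂ := ht' xs hxs
    have h₃ := hT xs xt
    rw [show xt - xs = b - a by simp only [a, b]; abel] at h₁
    rw [hab] at h₂ h₃
    simp only [inner_add_right, inner_sub_left, inner_sub_right, real_inner_smul_right,
      real_inner_self_eq_norm_sq, real_inner_comm a b] at h₁ h₂ h₃ ⊢
    nlinarith
  have hba : ‖b‖ ≤ ‖a‖ := by
    by_contra! hlt
    have h₁ : (s + t) * ⟪a, b⟫ ≤ (s + t) * (‖a‖ * ‖b‖) :=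
      mul_le_mul_of_nonneg_left (real_inner_le_norm a b) (by linarith)
    have h₂ : 0 < (‖b‖ - ‖a‖) * (t * ‖b‖ - s * ‖a‖) :=
      mul_pos (by linarith) (by nlinarith [mul_lt_mul_of_pos_left hlt hs,
        mul_le_mul_of_nonneg_right hst (norm_nonneg b)])
    nlinarith
  have hinner : ‖b‖ ^ 2 ≤ ⟪a, b⟫ := by
    nlinarith [mul_le_mul_of_nonneg_left (pow_le_pow_left₀ (norm_nonneg b) hba 2) hs.le]
  rw [hab, norm_sub_sq_real]
  linarith

variable [CompleteSpace E]

theorem exists_forall_inner_sub_nonpos (hne : C.Nonempty) (hcl : IsClosed C) (hcv : Convex ℝ C)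
    (u : E) : ∃ v ∈ C, ∀ w ∈ C, ⟪u - v, w - v⟫ ≤ 0 := by
  obtain ⟨v, hv, hmin⟩ := exists_norm_eq_iInf_of_complete_convex hne hcl.isComplete hcv u
  exact ⟨v, hv, (norm_eq_iInf_iff_real_inner_le_zero hcv hv).1 hmin⟩

theorem exists_forall_inner_nonneg_of_strongly_monotone (hne : C.Nonempty) (hcl : IsClosed C)
    (hcv : Convex ℝ C) {A : E → E} {μ : ℝ} (hμ : 0 < μ)
    (hA : ∀ x y, μ * ‖x - y‖ ^ 2 ≤ ⟪x - y, A x - A y⟫) {K : NNReal} (hAK : LipschitzWith K A) :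
    ∃ x ∈ C, ∀ y ∈ C, 0 ≤ ⟪y - x, A x⟫ := by
  choose P hPC hP using exists_forall_inner_sub_nonpos hne hcl hcv
  set Λ := max (K : ℝ) μ
  have hΛ : 0 < Λ := hμ.trans_le (le_max_right _ _)
  set γ := μ / Λ ^ 2
  -- `P` is the metric projection onto `C`; a fixed point of `x ↦ P (x - γ • A x)` is a solution
  have hQ : ContractingWith (1 - μ ^ 2 / (2 * Λ ^ 2)).toNNReal fun x => P (x - γ • A x) := by
    have hκ : 0 < μ ^ 2 / (2 * Λ ^ 2) := by positivity
    refine ⟨Real.toNNReal_lt_one.2 (by linarith), LipschitzWith.of_dist_le' fun x y => ?_⟩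
    rw [dist_eq_norm, dist_eq_norm]
    refine (norm_sub_le_of_forall_inner_sub_nonpos (hPC _) (hPC _) (hP _) (hP _)).trans ?_
    rw [show x - γ • A x - (y - γ • A y) = (x - y) - γ • (A x - A y) by rw [smul_sub]; abel]
    exact norm_sub_smul_le_of_le_inner hμ (le_max_right _ _) (hA x y)
      ((hAK.norm_sub_le x y).trans (by gcongr; exact le_max_left _ _))
  set x := ContractingWith.fixedPoint _ hQ
  have hx : P (x - γ • A x) = x := hQ.fixedPoint_isFixedPt
  refine ⟨x, hx ▸ hPC _, fun y hy => ?_⟩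
  have := hP (x - γ • A x) y hy
  rw [hx, sub_sub_cancel_left, inner_neg_left, real_inner_smul_left, real_inner_comm] at this
  have hγ : 0 < γ := by positivity
  nlinarith

theorem exists_forall_inner_nonneg_of_monotone (hcl : IsClosed C) (hcv : Convex ℝ C)
    {T : E → E} (hT : ∀ x y, 0 ≤ ⟪x - y, T x - T y⟫) {K : NNReal} (hTK : LipschitzWith K T)
    {z₀ : E} (hz₀ : z₀ ∈ C) (hbdd : IsBounded {x ∈ C | ⟪x - z₀, T x⟫ ≤ 0}) :
    ∃ x ∈ C, ∀ y ∈ C, 0 ≤ ⟪y - x, T x⟫ := by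
  set t : ℕ → ℝ := fun n => 1 / (n + 1)
  have ht : ∀ n, 0 < t n := fun n => by positivity
  have hreg : ∀ n, ∃ x ∈ C, ∀ y ∈ C, 0 ≤ ⟪y - x, T x + t n • (x - z₀)⟫ := fun n =>
    exists_forall_inner_nonneg_of_strongly_monotone ⟨z₀, hz₀⟩ hcl hcv (ht n)
      (fun x y => by
        rw [show T x + t n • (x - z₀) - (T y + t n • (y - z₀)) = (T x - T y) + t n • (x - y) by
          simp only [smul_sub]; abel, inner_add_right, real_inner_smul_right,
          real_inner_self_eq_norm_sq]
        linarith [hT x y])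
      (hTK.add ((lipschitzWith_smul (t n)).comp
        (LipschitzWith.of_dist_le_mul (K := 1) fun x y => by simp)))
  choose x hxC hx using hreg
  have hxbdd : ∀ n, x n ∈ {x ∈ C | ⟪x - z₀, T x⟫ ≤ 0} := fun n => by
    refine ⟨hxC n, ?_⟩
    have := hx n z₀ hz₀
    rw [← neg_sub, inner_neg_left, inner_add_right, real_inner_smul_right,
      real_inner_self_eq_norm_sq] at this
    nlinarith [ht n]
  obtain ⟨R, hR⟩ := isBounded_iff_forall_norm_le.1 hbdd
  have hcauchy : CauchySeq x := by
    refine cauchySeq_of_norm_sub_sq_le (r := fun n => ‖x n - z₀‖ ^ 2) ⟨(R + ‖z₀‖) ^ 2, ?_⟩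
      fun n m hnm => ?_
    · rintro _ ⟨n, rfl⟩
      exact pow_le_pow_left₀ (norm_nonneg _)
        ((norm_sub_le _ _).trans (by linarith [hR _ (hxbdd n)])) 2
    · exact norm_sub_sq_le_of_regularized hT (ht m)
        (one_div_le_one_div_of_le (by positivity) (by gcongr)) (hxC m) (hxC n) (hx m) (hx n)
  obtain ⟨x₀, hx₀⟩ := cauchySeq_tendsto_of_complete hcauchy
  refine ⟨x₀, hcl.mem_of_tendsto hx₀ (Eventually.of_forall hxC), fun y hy => ?_⟩
  have hlim : Tendsto (fun n => ⟪y - x n, T (x n) + t n • (x n - z₀)⟫) atTop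
      (𝓝 ⟪y - x₀, T x₀ + (0 : ℝ) • (x₀ - z₀)⟫) :=
    (tendsto_const_nhds.sub hx₀).inner ((hTK.continuous.tendsto x₀ |>.comp hx₀).add
      (tendsto_one_div_add_atTop_nhds_zero_nat.smul (hx₀.sub_const z₀)))
  simpa using ge_of_tendsto' hlim fun n => hx n y hy

end VariationalInequality

section RelaxedOperator

variable {H : Type*} [NormedAddCommGroup H] [InnerProductSpace ℝ H] [CompleteSpace H]
  {I : Type*} [Fintype I] {G : I → Type*} [∀ i, NormedAddCommGroup (G i)]
  [∀ i, InnerProductSpace ℝ (G i)] [∀ i, CompleteSpace (G i)]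
  {ω : I → ℝ} {L : ∀ i, H →L[ℝ] G i} {F : ∀ i, G i → G i} {p : ∀ i, G i}

variable (ω L F p) in
noncomputable def relaxedOperator (x : H) : H :=
  ∑ j, ω j • ContinuousLinearMap.adjoint (L j) (F j (L j x) - p j)

theorem inner_relaxedOperator (x y : H) :
    ⟪y, relaxedOperator ω L F p x⟫ = ∑ j, ω j * ⟪L j y, F j (L j x) - p j⟫ := by
  simp only [relaxedOperator, inner_sum, real_inner_smul_right,
    ContinuousLinearMap.adjoint_inner_right]

theorem inner_relaxedOperator_sub (x x' y : H) :
    ⟪y, relaxedOperator ω L F p x - relaxedOperator ω L F p x'⟫ =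
      ∑ j, ω j * ⟪L j y, F j (L j x) - F j (L j x')⟫ := by
  rw [inner_sub_right, inner_relaxedOperator, inner_relaxedOperator, ← Finset.sum_sub_distrib]
  congr! 1 with j
  rw [← mul_sub, ← inner_sub_right, sub_sub_sub_cancel_right]

theorem inner_sub_relaxedOperator_nonneg (hω : ∀ j, 0 ≤ ω j)
    (hF : ∀ j u v, 0 ≤ ⟪u - v, F j u - F j v⟫) (x y : H) :
    0 ≤ ⟪x - y, relaxedOperator ω L F p x - relaxedOperator ω L F p y⟫ := by
  rw [inner_relaxedOperator_sub]
  exact Finset.sum_nonneg fun j _ => mul_nonneg (hω j) (by simpa using hF j (L j x) (L j y))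

theorem lipschitzWith_relaxedOperator (hω : ∀ j, 0 ≤ ω j) (hF : ∀ j, LipschitzWith 1 (F j)) :
    LipschitzWith (∑ j, ω j * ‖L j‖ ^ 2).toNNReal (relaxedOperator ω L F p) := by
  refine LipschitzWith.of_dist_le' fun x y => ?_
  rw [dist_eq_norm, dist_eq_norm, relaxedOperator, relaxedOperator, ← Finset.sum_sub_distrib,
    Finset.sum_mul]
  refine (norm_sum_le _ _).trans (Finset.sum_le_sum fun j _ => ?_)
  rw [← smul_sub, ← map_sub, sub_sub_sub_cancel_right, norm_smul, Real.norm_of_nonneg (hω j),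
    mul_assoc]
  refine mul_le_mul_of_nonneg_left ?_ (hω j)
  calc ‖ContinuousLinearMap.adjoint (L j) (F j (L j x) - F j (L j y))‖
      ≤ ‖L j‖ * ‖F j (L j x) - F j (L j y)‖ := by
        simpa only [LinearIsometryEquiv.norm_map] using
          (ContinuousLinearMap.adjoint (L j)).le_opNorm (F j (L j x) - F j (L j y))
    _ ≤ ‖L j‖ * ‖L j (x - y)‖ := by
        gcongr; simpa using (hF j).norm_sub_le (L j x) (L j y)
    _ ≤ ‖L j‖ * (‖L j‖ * ‖x - y‖) := by gcongr; exact (L j).le_opNorm _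
    _ = ‖L j‖ ^ 2 * ‖x - y‖ := by ring

theorem isBounded_setOf_inner_relaxedOperator_nonpos (hω : ∀ j, 0 ≤ ω j)
    (hF : ∀ j, FirmlyNonexpansive (F j)) {i : I} (hωi : 0 < ω i)
    (hadj : Function.Surjective (ContinuousLinearMap.adjoint (L i)))
    (hFi : Function.Surjective (F i)) (z₀ : H) :
    IsBounded {x | ⟪x - z₀, relaxedOperator ω L F p x⟫ ≤ 0} := by
  set T := relaxedOperator ω L F p
  obtain ⟨g₀, hg₀⟩ := hadj ((ω i)⁻¹ • T z₀)
  refine (isBounded_setOf_inner_map_sub_nonpos hadj (hF i) hFi z₀ (F i (L i z₀) - g₀)).subset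
    fun x (hx : ⟪x - z₀, T x⟫ ≤ 0) => ?_
  have hT₀ : ⟪x - z₀, T z₀⟫ = ω i * ⟪L i (x - z₀), g₀⟫ := by
    rw [← ContinuousLinearMap.adjoint_inner_right, hg₀, real_inner_smul_right,
      mul_inv_cancel_left₀ hωi.ne']
  have hsingle : ω i * ⟪L i (x - z₀), F i (L i x) - F i (L i z₀)⟫ ≤ ⟪x - z₀, T x - T z₀⟫ := by
    rw [inner_relaxedOperator_sub]
    exact Finset.single_le_sum (f := fun j => ω j * ⟪L j (x - z₀), F j (L j x) - F j (L j z₀)⟫)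
      (fun j _ => mul_nonneg (hω j) (by simpa using (hF j).inner_sub_nonneg (L j x) (L j z₀)))
      (Finset.mem_univ i)
  have : ω i * ⟪L i (x - z₀), F i (L i x) - (F i (L i z₀) - g₀)⟫ ≤ 0 := by
    rw [sub_sub_eq_add_sub, add_sub_right_comm, inner_add_right, mul_add]
    linarith [inner_sub_right (𝕜 := ℝ) (x - z₀) (T x) (T z₀)]
  exact nonpos_of_mul_nonpos_right this hωi

end RelaxedOperator

theorem relaxed_has_solution_of_surjective_general
    {H : Type*} [NormedAddCommGroup H] [InnerProductSpace ℝ H] [CompleteSpace H]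
    {I : Type*} [Fintype I]
    (G : I → Type*) [∀ i, NormedAddCommGroup (G i)] [∀ i, InnerProductSpace ℝ (G i)]
    [∀ i, CompleteSpace (G i)]
    (ω : I → ℝ) (hω : ∀ i, ω i ∈ Set.Ioo (0 : ℝ) 1)
    (C : Set H) (hCne : C.Nonempty) (hCcl : IsClosed C) (hCcv : Convex ℝ C)
    (p : ∀ i, G i) (L : ∀ i, H →L[ℝ] G i)
    (F : ∀ i, G i → G i)
    (hF : ∀ i, ∀ u v : G i, ⟪u - v, F i u - F i v⟫ ≥ ‖F i u - F i v‖ ^ 2)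
    (i : I) (hadj : Function.Surjective (ContinuousLinearMap.adjoint (L i)))
    (hFsurj : Function.Surjective (F i)) :
    ∃ x ∈ C, ∀ y ∈ C, (∑ i, ω i * ⟪L i (y - x), F i (L i x) - p i⟫) ≥ 0 := by
  obtain ⟨z₀, hz₀⟩ := hCne
  have hω₀ : ∀ j, 0 ≤ ω j := fun j => (hω j).1.le
  have hFn : ∀ j, FirmlyNonexpansive (F j) := hF
  obtain ⟨x, hxC, hx⟩ := exists_forall_inner_nonneg_of_monotone hCcl hCcv
    (inner_sub_relaxedOperator_nonneg hω₀ fun j => (hFn j).inner_sub_nonneg)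
    (lipschitzWith_relaxedOperator (p := p) hω₀ fun j => (hFn j).lipschitzWith_one) hz₀
    ((isBounded_setOf_inner_relaxedOperator_nonpos hω₀ hFn (hω i).1 hadj hFsurj z₀).subset
      fun _ hy => hy.2)
  exact ⟨x, hxC, fun y hy => (inner_relaxedOperator x (y - x)).symm.trans_ge (hx y hy)⟩

/-- If for some `i`, `Lᵢ*` is surjective and `Fᵢ` is surjective, the relaxed variational
inequality problem has a solution. -/
theorem relaxed_has_solution_of_surjective
    {H : Type*} [NormedAddCommGroup H] [InnerProductSpace ℝ H] [CompleteSpace H]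
    {I : Type*} [Fintype I] [Nonempty I]
    (G : I → Type*) [∀ i, NormedAddCommGroup (G i)] [∀ i, InnerProductSpace ℝ (G i)]
    [∀ i, CompleteSpace (G i)]
    (ω : I → ℝ) (hω : ∀ i, ω i ∈ Set.Ioo (0 : ℝ) 1) (hωsum : ∑ i, ω i = 1)
    (C : Set H) (hCne : C.Nonempty) (hCcl : IsClosed C) (hCcv : Convex ℝ C)
    (p : ∀ i, G i) (L : ∀ i, H →L[ℝ] G i) (hL : ∀ i, L i ≠ 0)
    (F : ∀ i, G i → G i)
    (hF : ∀ i, ∀ u v : G i, ⟪u - v, F i u - F i v⟫ ≥ ‖F i u - F i v‖ ^ 2)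
    (i : I) (hadj : Function.Surjective (ContinuousLinearMap.adjoint (L i)))
    (hFsurj : Function.Surjective (F i)) :
    ∃ x ∈ C, ∀ y ∈ C, (∑ i, ω i * ⟪L i (y - x), F i (L i x) - p i⟫) ≥ 0 :=
  relaxed_has_solution_of_surjective_general G ω hω C hCne hCcl hCcv p L F hF i hadj hFsurj
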